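/- arXiv:1005.4259 — 7 statements merged into one kernel-verified Lean document; each statement's English description precedes it below -/
import Mathlib

section
/- Let R be a commutative unital ring, A an associative unital R-algebra, I a two-sided ideal of A, and J an R-submodule of A with I ⊆ J. Then J is a (two-sided) Mathieu subspace of A if and only if the image J/I is a (two-sided) Mathieu subspace of the quotient R-algebra A/I. -/
/-- `J` is a (two-sided) Mathieu subspace of the `R`-algebra `A`. -/
def IsMathieuSubspace {R A : Type*} [CommRing R] [Ring A] [Algebra R A]
    (J : Submodule R A) : Prop :=
  ∀ a : A, (∀ m : ℕ, 1 ≤ m → a ^ m ∈ J) →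
    ∀ b c : A, ∃ N : ℕ, 1 ≤ N ∧ ∀ m : ℕ, N ≤ m → b * a ^ m * c ∈ J

/-- The quotient of an `R`-algebra by a ring congruence is again an `R`-algebra,
with structure map induced by the quotient map. -/
noncomputable instance quotAlgebra {R A : Type*} [CommRing R] [Ring A] [Algebra R A]
    (c : RingCon A) : Algebra R c.Quotient :=
  RingHom.toAlgebra' ((RingCon.mk' c).comp (algebraMap R A)) (by
    intro r x
    induction x using Quotient.ind
    rename_i y
    show ((algebraMap R A r : A) : c.Quotient) * (y : c.Quotient)
        = (y : c.Quotient) * ((algebraMap R A r : A) : c.Quotient)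
    rw [← RingCon.coe_mul, ← RingCon.coe_mul, Algebra.commutes])

/-- The image `J/I` of `J` in the quotient algebra `A/I`. -/
noncomputable def quotImage {R A : Type*} [CommRing R] [Ring A] [Algebra R A]
    (I : TwoSidedIdeal A) (J : Submodule R A) : Submodule R I.ringCon.Quotient :=
  Submodule.span R (RingCon.mk' I.ringCon '' (J : Set A))

noncomputable def quotLin {R A : Type*} [CommRing R] [Ring A] [Algebra R A]
    (I : TwoSidedIdeal A) : A →ₗ[R] I.ringCon.Quotient where
  toFun := RingCon.mk' I.ringCon
  map_add' x y := map_add _ x y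
  map_smul' r x := by
    simp only [RingHom.id_apply]
    rw [Algebra.smul_def, Algebra.smul_def (A := I.ringCon.Quotient)]
    show (RingCon.mk' I.ringCon) _ = _
    rw [map_mul]
    rfl

lemma quotImage_eq {R A : Type*} [CommRing R] [Ring A] [Algebra R A]
    (I : TwoSidedIdeal A) (J : Submodule R A) :
    quotImage I J = Submodule.map (quotLin I) J := by
  unfold quotImage
  rw [← Submodule.span_eq (Submodule.map (quotLin I) J)]
  rfl

lemma mem_quotImage {R A : Type*} [CommRing R] [Ring A] [Algebra R A]
    (I : TwoSidedIdeal A) (J : Submodule R A) (hIJ : (I : Set A) ⊆ (J : Set A)) (a : A) :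
    (RingCon.mk' I.ringCon a) ∈ quotImage I J ↔ a ∈ J := by
  rw [quotImage_eq]
  constructor
  · rintro ⟨a', ha', h⟩
    have : I.ringCon a' a := (RingCon.eq I.ringCon).mp h
    rw [TwoSidedIdeal.rel_iff] at this
    have h2 : a' - a ∈ J := hIJ this
    have := J.sub_mem ha' h2
    simpa using this
  · exact fun h => ⟨a, h, rfl⟩

theorem stmt2 {R A : Type*} [CommRing R] [Ring A] [Algebra R A]
    (I : TwoSidedIdeal A) (J : Submodule R A) (hIJ : (I : Set A) ⊆ (J : Set A)) :
    IsMathieuSubspace J ↔ IsMathieuSubspace (quotImage I J) := by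
  set π := RingCon.mk' I.ringCon
  constructor
  · intro hJ x hx b c
    have hsurj : Function.Surjective π := fun y => Quot.inductionOn y (fun a => ⟨a, rfl⟩)
    obtain ⟨a, rfl⟩ := hsurj x
    obtain ⟨b', rfl⟩ := hsurj b
    obtain ⟨c', rfl⟩ := hsurj c
    have ha : ∀ m : ℕ, 1 ≤ m → a ^ m ∈ J := by
      intro m hm
      rw [← mem_quotImage I J hIJ, map_pow]
      exact hx m hm
    obtain ⟨N, hN1, hN⟩ := hJ a ha b' c'
    refine ⟨N, hN1, fun m hm => ?_⟩
    have := (mem_quotImage I J hIJ _).mpr (hN m hm)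
    rwa [map_mul, map_mul, map_pow] at this
  · intro hQ a ha b c
    have hx : ∀ m : ℕ, 1 ≤ m → (π a) ^ m ∈ quotImage I J := by
      intro m hm
      rw [← map_pow, mem_quotImage I J hIJ]
      exact ha m hm
    obtain ⟨N, hN1, hN⟩ := hQ (π a) hx (π b) (π c)
    refine ⟨N, hN1, fun m hm => ?_⟩
    have := hN m hm
    rw [← map_pow, ← map_mul, ← map_mul, mem_quotImage I J hIJ] at this
    exact this
end

section
/- Let R be a commutative unital ring and A an associative unital R-algebra such that every element of A is integral over R (i.e., every a ∈ A satisfies a monic polynomial with coefficients in the image of R in A) and every element of A is either invertible or nilpotent. Then A is quasi-stable, i.e., every R-submodule J of A with 1 ∉ J is a (two-sided) Mathieu subspace of A. -/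
open Polynomial

/-- If `p` is monic of degree `k` and `p(u⁻¹) = 0`, then `0 = uᵏ p(u⁻¹) = 1 + ∑_{i<k} pᵢ uᵏ⁻ⁱ`. -/
theorem one_mem_span_pow_succ_of_isIntegral_inv {R A : Type*} [CommRing R] [Ring A]
    [Algebra R A] {u : Aˣ} (h : IsIntegral R (↑u⁻¹ : A)) :
    (1 : A) ∈ Submodule.span R (Set.range fun n : ℕ => (u : A) ^ (n + 1)) := by
  obtain ⟨p, hmonic, hp⟩ := h
  set k := p.natDegree
  have hpow : ∀ i ≤ k, (u : A) ^ k * (↑u⁻¹ : A) ^ i = (u : A) ^ (k - i) := fun i hi => by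
    rw [← Units.val_pow_eq_pow_val, ← Units.val_pow_eq_pow_val, ← Units.val_pow_eq_pow_val,
      ← Units.val_mul, inv_pow, ← pow_sub u hi]
  have hsum : ∑ i ∈ Finset.range (k + 1), p.coeff i • (u : A) ^ (k - i) = 0 := by
    rw [← mul_zero ((u : A) ^ k), ← hp, ← aeval_def, aeval_eq_sum_range, Finset.mul_sum]
    refine Finset.sum_congr rfl fun i hi => ?_
    rw [mul_smul_comm, hpow i (Finset.mem_range_succ_iff.mp hi)]
  rw [Finset.sum_range_succ, hmonic.coeff_natDegree, Nat.sub_self, pow_zero, one_smul] at hsum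
  rw [eq_neg_of_add_eq_zero_right hsum]
  refine neg_mem (Submodule.sum_mem _ fun i hi => Submodule.smul_mem _ _
    (Submodule.subset_span ⟨k - i - 1, ?_⟩))
  have := Finset.mem_range.mp hi
  dsimp only
  congr 1
  omega

theorem stmt4 {R A : Type*} [CommRing R] [Ring A] [Algebra R A]
    (hint : ∀ a : A, IsIntegral R a)
    (hdich : ∀ a : A, IsUnit a ∨ IsNilpotent a) :
    ∀ J : Submodule R A, (1 : A) ∉ J → IsMathieuSubspace J := by
  intro J hJ a ha b c
  rcases hdich a with ⟨u, rfl⟩ | ⟨n, hn⟩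
  · have hspan := Submodule.span_le.mpr (Set.range_subset_iff.mpr fun m => ha (m + 1) m.succ_pos)
    exact (hJ (hspan (one_mem_span_pow_succ_of_isIntegral_inv (hint _)))).elim
  · refine ⟨n + 1, n.succ_pos, fun m hm => ?_⟩
    rw [pow_eq_zero_of_le (by omega) hn, mul_zero, zero_mul]
    exact J.zero_mem
end

section
/- Let R be a commutative unital ring, A an associative unital R-algebra, M a left A-module, u ∈ M, and N an R-submodule of M. Then (σ(N) : u) = σ((N : u)) and (τ(N) : u) = τ((N : u)), where on the right-hand sides (N : u) is regarded as an R-submodule of A viewed as a left A-module and σ, τ are taken in that module. -/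
/-- An `R`-subspace `J` of `A` is a two-sided ideal of `A` if it absorbs
multiplication on both sides. -/
def IsTwoSidedIdealSubspace {R A : Type*} [CommRing R] [Ring A] [Algebra R A]
    (J : Submodule R A) : Prop :=
  ∀ a ∈ J, ∀ b : A, b * a ∈ J ∧ a * b ∈ J

variable {R A M : Type*} [CommRing R] [Ring A] [Algebra R A] [AddCommGroup M]
  [Module A M] [Module R M] [IsScalarTower R A M]

/-- For `u ∈ M` and an `R`-subspace `N` of `M`, the `R`-subspace
`(N : u) = {a ∈ A | a • u ∈ N}` of `A`. -/
def colonSub (N : Submodule R M) (u : M) : Submodule R A where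
  carrier := {a : A | a • u ∈ N}
  add_mem' := by
    intro a b ha hb
    simp only [Set.mem_setOf_eq, add_smul] at *
    exact N.add_mem ha hb
  zero_mem' := by
    simp only [Set.mem_setOf_eq, zero_smul]
    exact N.zero_mem
  smul_mem' := by
    intro r a ha
    simp only [Set.mem_setOf_eq] at *
    rw [smul_assoc]
    exact N.smul_mem r ha

@[simp] lemma mem_colonSub {N : Submodule R M} {u : M} {a : A} :
    a ∈ colonSub (A := A) N u ↔ a • u ∈ N := Iff.rfl

/-- The set of  stable elements of `N`. -/
def sigmaSet (N : Submodule R M) : Set M :=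
  {u : M | IsTwoSidedIdealSubspace (colonSub (A := A) N u)}

/-- The set of quasi-stable elements of `N`. -/
def tauSet (N : Submodule R M) : Set M :=
  {u : M | IsMathieuSubspace (colonSub (A := A) N u)}

lemma colonSub_smul (N : Submodule R M) (u : M) (a : A) :
    colonSub (A := A) N (a • u) =
      colonSub (A := A) (M := A) (colonSub (A := A) N u) a := by
  ext b
  simp only [mem_colonSub, smul_eq_mul, mul_smul]

theorem stmt6 (N : Submodule R M) (u : M) :
    {a : A | a • u ∈ sigmaSet (A := A) N} =
      sigmaSet (A := A) (M := A) (colonSub (A := A) N u) ∧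
    {a : A | a • u ∈ tauSet (A := A) N} =
      tauSet (A := A) (M := A) (colonSub (A := A) N u) := by
  constructor <;> ext a <;>
    simp only [Set.mem_setOf_eq, sigmaSet, tauSet, colonSub_smul]
end

section
/- Let R be a commutative unital ring, A an associative unital R-algebra, M a left A-module, and (N_i)_{i ∈ I} a family of R-submodules of M. Then (i) ⋂_{i ∈ I} σ(N_i) ⊆ σ(⋂_{i ∈ I} N_i); and (ii) if the index set I is finite, then ⋂_{i ∈ I} τ(N_i) ⊆ τ(⋂_{i ∈ I} N_i). -/
variable {R A M : Type*} [CommRing R] [Ring A] [Algebra R A] [AddCommGroup M]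
  [Module A M] [Module R M] [IsScalarTower R A M]

theorem stmt7 {ι : Type*} (N : ι → Submodule R M) :
    (⋂ i, sigmaSet (A := A) (N i)) ⊆ sigmaSet (A := A) (⨅ i, N i) ∧
    (Finite ι → (⋂ i, tauSet (A := A) (N i)) ⊆ tauSet (A := A) (⨅ i, N i)) := by
  constructor
  · intro u hu a ha b
    simp only [Set.mem_iInter] at hu
    simp only [mem_colonSub, Submodule.mem_iInf] at ha ⊢
    constructor
    · intro i
      exact ((hu i a (ha i) b).1)
    · intro i
      exact ((hu i a (ha i) b).2)
  · intro hfin u hu a ha b c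
    haveI := Fintype.ofFinite ι
    simp only [Set.mem_iInter] at hu
    have key : ∀ i : ι, ∃ K : ℕ, 1 ≤ K ∧ ∀ m : ℕ, K ≤ m →
        b * a ^ m * c ∈ colonSub (A := A) (N i) u := by
      intro i
      refine hu i a (fun m hm => ?_) b c
      have := ha m hm
      simp only [mem_colonSub, Submodule.mem_iInf] at this ⊢
      exact this i
    choose f hf1 hf2 using key
    refine ⟨max 1 (Finset.univ.sup f), le_max_left _ _, fun m hm => ?_⟩
    simp only [mem_colonSub, Submodule.mem_iInf]
    intro i
    exact hf2 i m (le_trans (le_trans (Finset.le_sup (Finset.mem_univ i)) (le_max_right _ _)) hm)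
end

section
/- Let R be a commutative unital ring, A an associative unital R-algebra, M a left A-module, and N an R-submodule of M. Let I_N denote the largest A-submodule of M contained in N (equivalently, the sum of all A-submodules of M contained in N). Then I_N = N ∩ σ(N) = N ∩ τ(N). In particular, both N ∩ σ(N) and N ∩ τ(N) are A-submodules of M. -/
variable {R A M : Type*} [CommRing R] [Ring A] [Algebra R A] [AddCommGroup M]
  [Module A M] [Module R M] [IsScalarTower R A M]

/-- The greatest `A`-submodule of `M` contained in `N`. -/
def innerSub (N : Submodule R M) : Submodule A M where
  carrier := {u : M | ∀ a : A, a • u ∈ N}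
  add_mem' := by
    intro u v hu hv a
    rw [smul_add]
    exact N.add_mem (hu a) (hv a)
  zero_mem' := by
    intro a
    rw [smul_zero]
    exact N.zero_mem
  smul_mem' := by
    intro b u hu a
    rw [← mul_smul]
    exact hu (a * b)

lemma sSup_eq_innerSub (N : Submodule R M) :
    (sSup {P : Submodule A M | (P : Set M) ⊆ (N : Set M)} : Submodule A M) = innerSub N := by
  apply le_antisymm
  · apply sSup_le
    intro P hP u hu a
    exact hP (P.smul_mem a hu)
  · apply le_sSup
    intro u hu
    simpa using hu (1 : A)

theorem stmt9 (N : Submodule R M) :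
    ((sSup {P : Submodule A M | (P : Set M) ⊆ (N : Set M)} : Submodule A M) : Set M) =
      (N : Set M) ∩ sigmaSet (A := A) N ∧
    ((sSup {P : Submodule A M | (P : Set M) ⊆ (N : Set M)} : Submodule A M) : Set M) =
      (N : Set M) ∩ tauSet (A := A) N := by
  rw [sSup_eq_innerSub]
  constructor <;> ext u <;>
    simp only [SetLike.mem_coe, Set.mem_inter_iff, sigmaSet, tauSet, Set.mem_setOf_eq] <;>
    constructor
  · intro hu
    refine ⟨by simpa using hu (1 : A), ?_⟩
    intro a _ b
    exact ⟨hu _, hu _⟩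
  · rintro ⟨huN, hσ⟩ a
    have h1 : (1 : A) ∈ colonSub (A := A) N u := by simpa using huN
    simpa using (hσ 1 h1 a).1
  · intro hu
    refine ⟨by simpa using hu (1 : A), ?_⟩
    intro a _ b c
    exact ⟨1, le_refl 1, fun m _ => hu _⟩
  · rintro ⟨huN, hτ⟩ a
    have h1 : ∀ m : ℕ, 1 ≤ m → (1 : A) ^ m ∈ colonSub (A := A) N u := by
      intro m _; simpa using huN
    obtain ⟨K, hK1, hK⟩ := hτ 1 h1 a 1
    simpa using hK K le_rfl
end

section
/- Let R be a commutative unital ring, A an associative unital R-algebra, M and M' left A-modules, and φ : M → M' a homomorphism of A-modules. Then for every R-submodule H of M', φ^{-1}(σ(H)) = σ(φ^{-1}(H)) and φ^{-1}(τ(H)) = τ(φ^{-1}(H)). -/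
variable {R A M : Type*} [CommRing R] [Ring A] [Algebra R A] [AddCommGroup M]
  [Module A M] [Module R M] [IsScalarTower R A M]

theorem stmt12 {M' : Type*} [AddCommGroup M'] [Module A M'] [Module R M']
    [IsScalarTower R A M'] (φ : M →ₗ[A] M') (H : Submodule R M') :
    ⇑φ ⁻¹' sigmaSet (A := A) H =
      sigmaSet (A := A) (H.comap (φ.restrictScalars R)) ∧
    ⇑φ ⁻¹' tauSet (A := A) H =
      tauSet (A := A) (H.comap (φ.restrictScalars R)) := by
  have key : ∀ u : M, colonSub (A := A) (H.comap (φ.restrictScalars R)) u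
      = colonSub (A := A) H (φ u) := by
    intro u
    ext a
    simp [map_smul]
  constructor <;> ext u <;>
    simp only [Set.mem_preimage, sigmaSet, tauSet, Set.mem_setOf_eq, key]
end

section
/- Let R be a commutative unital ring, A and B associative unital R-algebras, and ψ : A → B a homomorphism of R-algebras. For an R-submodule J of B, let σ_B(J) and τ_B(J) be computed with B regarded as a left B-module, and let σ_A(ψ^{-1}(J)) and τ_A(ψ^{-1}(J)) be computed with A regarded as a left A-module. Then ψ^{-1}(σ_B(J)) ⊆ σ_A(ψ^{-1}(J)) and ψ^{-1}(τ_B(J)) ⊆ τ_A(ψ^{-1}(J)). Furthermore, if ψ is surjective, then equality holds in both inclusions. -/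
variable {R A M : Type*} [CommRing R] [Ring A] [Algebra R A] [AddCommGroup M]
  [Module A M] [Module R M] [IsScalarTower R A M]

theorem stmt13 {B : Type*} [Ring B] [Algebra R B] (ψ : A →ₐ[R] B)
    (J : Submodule R B) :
    (⇑ψ ⁻¹' sigmaSet (A := B) (M := B) J ⊆
        sigmaSet (A := A) (M := A) (J.comap ψ.toLinearMap)) ∧
    (⇑ψ ⁻¹' tauSet (A := B) (M := B) J ⊆
        tauSet (A := A) (M := A) (J.comap ψ.toLinearMap)) ∧
    (Function.Surjective ⇑ψ →
      (⇑ψ ⁻¹' sigmaSet (A := B) (M := B) J =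
          sigmaSet (A := A) (M := A) (J.comap ψ.toLinearMap)) ∧
      (⇑ψ ⁻¹' tauSet (A := B) (M := B) J =
          tauSet (A := A) (M := A) (J.comap ψ.toLinearMap))) := by
  have key : ∀ (u a : A), a ∈ colonSub (A := A) (J.comap ψ.toLinearMap) u ↔
      ψ a ∈ colonSub (A := B) J (ψ u) := by
    intro u a
    simp [mem_colonSub, smul_eq_mul, Submodule.mem_comap, map_mul]
  have hs : ⇑ψ ⁻¹' sigmaSet (A := B) (M := B) J ⊆
      sigmaSet (A := A) (M := A) (J.comap ψ.toLinearMap) := by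
    intro u hu a ha b
    rw [key] at ha
    obtain ⟨h1, h2⟩ := hu (ψ a) ha (ψ b)
    constructor
    · rw [key, map_mul]; exact h1
    · rw [key, map_mul]; exact h2
  have ht : ⇑ψ ⁻¹' tauSet (A := B) (M := B) J ⊆
      tauSet (A := A) (M := A) (J.comap ψ.toLinearMap) := by
    intro u hu a ha b c
    have ha' : ∀ m : ℕ, 1 ≤ m → (ψ a) ^ m ∈ colonSub (A := B) J (ψ u) := by
      intro m hm
      rw [← map_pow, ← key]
      exact ha m hm
    obtain ⟨N, hN1, hN⟩ := hu (ψ a) ha' (ψ b) (ψ c)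
    refine ⟨N, hN1, fun m hm => ?_⟩
    rw [key, map_mul, map_mul, map_pow]
    exact hN m hm
  refine ⟨hs, ht, fun hsurj => ⟨?_, ?_⟩⟩
  · refine Set.Subset.antisymm hs fun u hu => ?_
    intro x hx b
    obtain ⟨a, rfl⟩ := hsurj x
    obtain ⟨b', rfl⟩ := hsurj b
    rw [← key] at hx
    obtain ⟨h1, h2⟩ := hu a hx b'
    rw [key, map_mul] at h1 h2
    exact ⟨h1, h2⟩
  · refine Set.Subset.antisymm ht fun u hu => ?_
    intro x hx b c
    obtain ⟨a, rfl⟩ := hsurj x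
    obtain ⟨b', rfl⟩ := hsurj b
    obtain ⟨c', rfl⟩ := hsurj c
    have hx' : ∀ m : ℕ, 1 ≤ m → a ^ m ∈ colonSub (A := A) (J.comap ψ.toLinearMap) u := by
      intro m hm
      rw [key, map_pow]
      exact hx m hm
    obtain ⟨N, hN1, hN⟩ := hu a hx' b' c'
    refine ⟨N, hN1, fun m hm => ?_⟩
    have := hN m hm
    rw [key, map_mul, map_mul, map_pow] at this
    exact this
end
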